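/- Let G be a connected locally finite graph with edge set E, let e ∈ E, and let λ, λ' : E → [0,1] be injective labellings that agree on every edge other than e. If e ∈ F_F(λ) and λ'(e) > Z_λ(e), then F_F(λ') = (F_F(λ) ∖ {e}) ∪ {φ(e,λ)}, where {φ(e,λ)} is read as the empty set if φ(e,λ) = ∅. -/

import Mathlib

namespace MSF

variable {V : Type*}

/-- The free minimal spanning forest of an (injective) labelling: the set of edges `e` such
that there is no finite cycle of `G` containing `e` on which `lab e` is the maximal label. -/
def setFF (G : SimpleGraph V) (lab : G.edgeSet → ℝ) : Set G.edgeSet :=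
  {e | ¬ ∃ (v : V) (c : G.Walk v v), c.IsCycle ∧ (e : Sym2 V) ∈ c.edges ∧
    ∀ e' : G.edgeSet, (e' : Sym2 V) ∈ c.edges → lab e' ≤ lab e}

/-- `Z_lab(e)`: the infimum, over finite cycles `C` of `G` containing `e`, of the maximal
label on `C \ {e}` (equal to `∞` if no finite cycle contains `e`). -/
noncomputable def Z (G : SimpleGraph V) (lab : G.edgeSet → ℝ) (e : G.edgeSet) : ENNReal :=
  ⨅ (v : V) (c : {c : G.Walk v v // c.IsCycle ∧ (e : Sym2 V) ∈ c.edges}),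
    sSup {x : ENNReal | ∃ e' : G.edgeSet,
      (e' : Sym2 V) ∈ (c : G.Walk v v).edges ∧ e' ≠ e ∧ x = ENNReal.ofReal (lab e')}

/-- `f` attains the infimum in the definition of `Z_lab(e)`: `f ≠ e` lies on a finite cycle
through `e` on which it has the maximal label among the edges `≠ e`, and this label equals
`Z_lab(e)`. -/
def Attains (G : SimpleGraph V) (lab : G.edgeSet → ℝ) (e f : G.edgeSet) : Prop :=
  f ≠ e ∧ ENNReal.ofReal (lab f) = Z G lab e ∧
    ∃ (v : V) (c : G.Walk v v), c.IsCycle ∧ (e : Sym2 V) ∈ c.edges ∧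
      (f : Sym2 V) ∈ c.edges ∧
      ∀ e' : G.edgeSet, (e' : Sym2 V) ∈ c.edges → e' ≠ e → lab e' ≤ lab f

/-- `φ(e,lab)`: the edge attaining the infimum in `Z_lab(e)` if it exists, `∅` otherwise. -/
noncomputable def phi (G : SimpleGraph V) (lab : G.edgeSet → ℝ) (e : G.edgeSet) :
    Option G.edgeSet := by
  classical exact if h : ∃ f, Attains G lab e f then some h.choose else none


/-! The argument rests on cycle exchange: if `x` lies on cycles `C₁` and `C₂`, and `y` on `C₁`
but not on `C₂`, then `C₁ ∪ C₂` contains a cycle through `y` avoiding `x`.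

Since `lab'` only raises the label of `e` above `Z_lab(e) ≥ lab e`, no edge `≠ e` of `F_F(lab)`
leaves the forest, while `e` leaves it, being maximal on a cycle whose other labels lie below
`Z_lab(e)`. An edge `f` entering the forest is maximal on a `lab`-cycle `C`, which must pass
through `e`, so `Z_lab(e) ≤ lab f`; were this strict, exchanging `e` out of `C` and a cycle through
`e` with labels below `lab f` would give a `lab'`-cycle on which `f` is maximal; so `f` attains
`Z_lab(e)`, i.e. `f = φ`.
Conversely, if `φ` were maximal on a `lab'`-cycle `C`, then `e ∉ C`, and exchanging `φ` out of `C`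
and the cycle realising `Z_lab(e)` yields a cycle through `e` whose other labels are all below
`lab φ = Z_lab(e)`, which is absurd. -/

open SimpleGraph

lemma reachable_of_forall_adj_reachable {G H : SimpleGraph V}
    (h : ∀ u v, G.Adj u v → H.Reachable u v) {u v : V} (huv : G.Reachable u v) :
    H.Reachable u v := by
  obtain ⟨p⟩ := huv
  induction p with
  | nil => rfl
  | cons hadj _ ih => exact (h _ _ hadj).trans ih

lemma reachable_deleteEdges_of_isCycle {G : SimpleGraph V} {u v w : V} {c : G.Walk u u}
    (hc : c.IsCycle) (he : s(v, w) ∈ c.edges) :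
    (G.deleteEdges ({z | z ∉ c.edges} ∪ {s(v, w)})).Reachable v w := by
  have hc' : ∀ z ∈ c.edges, z ∈ (G.deleteEdges {z | z ∉ c.edges}).edgeSet := fun z hz => by
    rw [edgeSet_deleteEdges]
    exact ⟨c.edges_subset_edgeSet hz, not_not.2 hz⟩
  rw [← deleteEdges_deleteEdges]
  refine (adj_and_reachable_delete_edges_iff_exists_cycle.2
    ⟨u, c.transfer _ hc', hc.transfer hc', ?_⟩).2
  rwa [Walk.edges_transfer]

lemma exists_isCycle_exchange {G : SimpleGraph V} {u v : V} {x y : Sym2 V}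
    {c₁ : G.Walk u u} {c₂ : G.Walk v v} (hc₁ : c₁.IsCycle) (hc₂ : c₂.IsCycle)
    (hx₂ : x ∈ c₂.edges) (hy₁ : y ∈ c₁.edges) (hy₂ : y ∉ c₂.edges) :
    ∃ (w : V) (c : G.Walk w w), c.IsCycle ∧ y ∈ c.edges ∧
      ∀ z ∈ c.edges, z ≠ x ∧ (z ∈ c₁.edges ∨ z ∈ c₂.edges) := by
  cases x with | h p q => ?_
  cases y with | h a b => ?_
  set H := G.deleteEdges ({s(p, q)} ∪ {z | z ∉ c₁.edges ∧ z ∉ c₂.edges})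
  have hpq : (H.deleteEdges {s(a, b)}).Reachable p q := by
    refine (reachable_deleteEdges_of_isCycle hc₂ hx₂).mono ?_
    rw [deleteEdges_deleteEdges]
    refine deleteEdges_anti ?_
    rintro z ((rfl | ⟨-, hz⟩) | rfl)
    exacts [Or.inr rfl, Or.inl hz, Or.inl hy₂]
  have hab : (H.deleteEdges {s(a, b)}).Reachable a b := by
    refine reachable_of_forall_adj_reachable (fun u' v' huv => ?_)
      (reachable_deleteEdges_of_isCycle hc₁ hy₁)
    by_cases hx : s(u', v') = s(p, q)
    · rcases Sym2.eq_iff.1 hx with ⟨rfl, rfl⟩ | ⟨rfl, rfl⟩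
      exacts [hpq, hpq.symm]
    · refine Adj.reachable ?_
      simp only [H, deleteEdges_adj, Set.mem_union, Set.mem_singleton_iff,
        Set.mem_ofPred_eq] at huv ⊢
      tauto
  have hadj : H.Adj a b := by
    have := c₁.adj_of_mem_edges hy₁
    have hyx : s(a, b) ≠ s(p, q) := fun h => hy₂ (h ▸ hx₂)
    simp only [H, deleteEdges_adj, Set.mem_union, Set.mem_singleton_iff, Set.mem_ofPred_eq]
    tauto
  obtain ⟨w, c, hc, hyc⟩ := adj_and_reachable_delete_edges_iff_exists_cycle.1 ⟨hadj, hab⟩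
  refine ⟨w, c.mapLe (deleteEdges_le _), hc.mapLe _, by rwa [Walk.edges_mapLe_eq_edges],
    fun z hz => ?_⟩
  rw [Walk.edges_mapLe_eq_edges] at hz
  have hzH := c.edges_subset_edgeSet hz
  simp only [H, edgeSet_deleteEdges, Set.mem_sdiff, Set.mem_union, Set.mem_singleton_iff,
    Set.mem_ofPred_eq] at hzH
  tauto

section Labels

variable {G : SimpleGraph V} {lab lab' : G.edgeSet → ℝ} {e f : G.edgeSet}

lemma exists_max_label_of_isCycle (lab : G.edgeSet → ℝ) (e : G.edgeSet) {v : V}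
    {c : G.Walk v v} (hc : c.IsCycle) :
    ∃ e'' : G.edgeSet, (e'' : Sym2 V) ∈ c.edges ∧ e'' ≠ e ∧
      ∀ e' : G.edgeSet, (e' : Sym2 V) ∈ c.edges → e' ≠ e → lab e' ≤ lab e'' := by
  set S := {e' : G.edgeSet | (e' : Sym2 V) ∈ c.edges ∧ e' ≠ e}
  have hfin : S.Finite :=
    (c.edges.finite_toSet.preimage Subtype.val_injective.injOn).subset fun _ h => h.1
  have hne : S.Nonempty := by
    obtain ⟨z, hz, hze⟩ : ∃ z ∈ c.edges, z ≠ (e : Sym2 V) := by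
      by_contra! h
      have := (hc.edges_nodup.subperm fun z hz => List.mem_singleton.2 (h z hz)).length_le
      have := hc.three_le_length
      simp only [List.length_singleton, Walk.length_edges] at *
      omega
    exact ⟨⟨z, c.edges_subset_edgeSet hz⟩, hz, fun h => hze (congrArg Subtype.val h)⟩
  obtain ⟨e'', ⟨hc'', hne''⟩, hmax⟩ := Set.exists_max_image S lab hfin hne
  exact ⟨e'', hc'', hne'', fun e' he' hne' => hmax e' ⟨he', hne'⟩⟩

lemma Z_le_ofReal {v : V} {c : G.Walk v v} (hc : c.IsCycle) (he : (e : Sym2 V) ∈ c.edges)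
    {r : ℝ} (hr : ∀ e' : G.edgeSet, (e' : Sym2 V) ∈ c.edges → e' ≠ e → lab e' ≤ r) :
    Z G lab e ≤ ENNReal.ofReal r :=
  iInf₂_le_of_le v ⟨c, hc, he⟩ <| sSup_le <| by
    rintro _ ⟨e', he', hne, rfl⟩
    exact ENNReal.ofReal_le_ofReal (hr e' he' hne)

lemma Z_lt_ofReal_of_isCycle (hlab : ∀ e', 0 ≤ lab e') {v : V} {c : G.Walk v v}
    (hc : c.IsCycle) (he : (e : Sym2 V) ∈ c.edges) {r : ℝ}
    (hr : ∀ e' : G.edgeSet, (e' : Sym2 V) ∈ c.edges → e' ≠ e → lab e' < r) :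
    Z G lab e < ENNReal.ofReal r := by
  obtain ⟨e'', hc'', hne'', hmax⟩ := exists_max_label_of_isCycle lab e hc
  exact (Z_le_ofReal hc he hmax).trans_lt
    ((ENNReal.ofReal_lt_ofReal_iff_of_nonneg (hlab e'')).2 (hr e'' hc'' hne''))

lemma exists_isCycle_of_Z_lt {r : ℝ} (h : Z G lab e < ENNReal.ofReal r) :
    ∃ (v : V) (c : G.Walk v v), c.IsCycle ∧ (e : Sym2 V) ∈ c.edges ∧
      ∀ e' : G.edgeSet, (e' : Sym2 V) ∈ c.edges → e' ≠ e → lab e' < r := by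
  simp only [Z, iInf_lt_iff] at h
  obtain ⟨v, ⟨c, hc, he⟩, hlt⟩ := h
  refine ⟨v, c, hc, he, fun e' he' hne => ?_⟩
  exact (ENNReal.ofReal_lt_ofReal_iff'.1
    ((le_sSup (by exact ⟨e', he', hne, rfl⟩)).trans_lt hlt)).1

lemma ofReal_le_Z_of_mem_setFF (he : e ∈ setFF G lab) : ENNReal.ofReal (lab e) ≤ Z G lab e := by
  refine not_lt.1 fun h => ?_
  obtain ⟨v, c, hc, hec, hlt⟩ := exists_isCycle_of_Z_lt h
  apply he
  refine ⟨v, c, hc, hec, fun e' he' => ?_⟩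
  rcases eq_or_ne e' e with rfl | hne
  exacts [le_rfl, (hlt e' he' hne).le]

lemma Attains.unique (hlab : ∀ e', 0 ≤ lab e') (hinj : Function.Injective lab)
    {g : G.edgeSet} (hf : Attains G lab e f) (hg : Attains G lab e g) : f = g :=
  hinj <| (ENNReal.ofReal_eq_ofReal_iff (hlab f) (hlab g)).1 (hf.2.1.trans hg.2.1.symm)

lemma phi_eq_some_iff (hlab : ∀ e', 0 ≤ lab e') (hinj : Function.Injective lab) :
    phi G lab e = some f ↔ Attains G lab e f := by
  unfold phi
  split_ifs with h
  · rw [Option.some_inj]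
    exact ⟨fun hf => hf ▸ h.choose_spec, h.choose_spec.unique hlab hinj⟩
  · simpa using fun hf => h ⟨f, hf⟩

lemma mem_setFF_of_le (hle : ∀ e', lab e' ≤ lab' e') (hf : lab' f = lab f)
    (hmem : f ∈ setFF G lab) : f ∈ setFF G lab' := by
  rintro ⟨v, c, hc, hfc, hmax⟩
  exact hmem ⟨v, c, hc, hfc, fun e' he' => (hle e').trans ((hmax e' he').trans hf.le)⟩

variable (hagree : ∀ e' : G.edgeSet, e' ≠ e → lab' e' = lab e')
include hagree

lemma notMem_setFF_of_Z_lt (hgt : Z G lab e < ENNReal.ofReal (lab' e)) : e ∉ setFF G lab' := by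
  obtain ⟨v, c, hc, hec, hlt⟩ := exists_isCycle_of_Z_lt hgt
  refine not_not.2 ⟨v, c, hc, hec, fun e' he' => ?_⟩
  rcases eq_or_ne e' e with rfl | hne
  · exact le_rfl
  · exact (hagree e' hne).trans_le (hlt e' he' hne).le

lemma attains_of_mem_setFF (hf' : f ∈ setFF G lab') (hf : f ∉ setFF G lab) (hfe : f ≠ e) :
    Attains G lab e f := by
  obtain ⟨v, c, hc, hfc, hmax⟩ := not_not.1 hf
  have hec : (e : Sym2 V) ∈ c.edges := by
    by_contra hec
    refine hf' ⟨v, c, hc, hfc, fun e' he' => ?_⟩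
    have hne : e' ≠ e := by rintro rfl; exact hec he'
    rw [hagree e' hne, hagree f hfe]
    exact hmax e' he'
  rcases (Z_le_ofReal hc hec fun e' he' _ => hmax e' he').lt_or_eq with hlt | heq
  · exfalso
    obtain ⟨v₂, c₂, hc₂, hec₂, hlt₂⟩ := exists_isCycle_of_Z_lt hlt
    have hfc₂ : (f : Sym2 V) ∉ c₂.edges := fun h => (hlt₂ f h hfe).false
    obtain ⟨w, c', hc', hfc', hc'sub⟩ := exists_isCycle_exchange hc hc₂ hec₂ hfc hfc₂
    refine hf' ⟨w, c', hc', hfc', fun e' he' => ?_⟩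
    obtain ⟨hne, hmem⟩ := hc'sub _ he'
    have hne : e' ≠ e := ne_of_apply_ne Subtype.val hne
    rw [hagree e' hne, hagree f hfe]
    exact hmem.elim (hmax e') fun h => (hlt₂ e' h hne).le
  · exact ⟨hfe, heq.symm, v, c, hc, hec, hfc, fun e' he' _ => hmax e' he'⟩

lemma mem_setFF_of_attains (hlab : ∀ e', 0 ≤ lab e') (hinj : Function.Injective lab)
    (hgt : Z G lab e < ENNReal.ofReal (lab' e)) (hatt : Attains G lab e f) :
    f ∈ setFF G lab' := by
  obtain ⟨hfe, hZ, v₁, c₁, hc₁, hec₁, hfc₁, hmax₁⟩ := hatt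
  rintro ⟨v, c, hc, hfc, hmax⟩
  by_cases hec : (e : Sym2 V) ∈ c.edges
  · have hle : lab' e ≤ lab f := hagree f hfe ▸ hmax e hec
    have hlt : lab f < lab' e := (ENNReal.ofReal_lt_ofReal_iff'.1 (hZ ▸ hgt)).1
    linarith
  obtain ⟨w, c', hc', hec', hc'sub⟩ := exists_isCycle_exchange hc₁ hc hfc hec₁ hec
  refine (Z_lt_ofReal_of_isCycle hlab hc' hec' (r := lab f) fun e' he' hne => ?_).ne hZ.symm
  obtain ⟨hnf, hmem⟩ := hc'sub _ he'
  refine lt_of_le_of_ne ?_ (hinj.ne (ne_of_apply_ne Subtype.val hnf))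
  exact hmem.elim (hmax₁ e' · hne) fun h => hagree e' hne ▸ hagree f hfe ▸ hmax e' h

end Labels

theorem setFF_eq_of_mem_of_gt_general
    {V : Type*} (G : SimpleGraph V)
    (e : G.edgeSet) (lab lab' : G.edgeSet → ℝ)
    (hinj : Function.Injective lab)
    (hrange : ∀ e' : G.edgeSet, lab e' ∈ Set.Icc (0 : ℝ) 1)
    (hagree : ∀ e' : G.edgeSet, e' ≠ e → lab' e' = lab e')
    (hmem : e ∈ setFF G lab) (hgt : Z G lab e < ENNReal.ofReal (lab' e)) :
    setFF G lab' = (setFF G lab \ {e}) ∪ {f | phi G lab e = some f} := by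
  have hlab : ∀ e', 0 ≤ lab e' := fun e' => (hrange e').1
  have he' : e ∉ setFF G lab' := notMem_setFF_of_Z_lt hagree hgt
  have hle : ∀ e', lab e' ≤ lab' e' := fun e' => by
    rcases eq_or_ne e' e with rfl | hne
    · exact (ENNReal.ofReal_lt_ofReal_iff'.1 ((ofReal_le_Z_of_mem_setFF hmem).trans_lt hgt)).1.le
    · exact (hagree e' hne).ge
  ext f
  simp only [Set.mem_union, Set.mem_sdiff, Set.mem_singleton_iff, Set.mem_ofPred_eq,
    phi_eq_some_iff hlab hinj]
  constructor
  · intro hf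
    have hfe : f ≠ e := by rintro rfl; exact he' hf
    by_cases hfF : f ∈ setFF G lab
    · exact Or.inl ⟨hfF, hfe⟩
    · exact Or.inr (attains_of_mem_setFF hagree hf hfF hfe)
  · rintro (⟨hf, hfe⟩ | hatt)
    · exact mem_setFF_of_le hle (hagree f hfe) hf
    · exact mem_setFF_of_attains hagree hlab hinj hgt hatt

/-- If `e ∈ F_F(lab)` and `lab' e > Z_lab(e)` then
`F_F(lab') = (F_F(lab) \ {e}) ∪ {φ(e,lab)}`. -/
theorem setFF_eq_of_mem_of_gt
    {V : Type*} (G : SimpleGraph V) (hconn : G.Connected)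
    (hlf : ∀ v : V, (G.neighborSet v).Finite)
    (e : G.edgeSet) (lab lab' : G.edgeSet → ℝ)
    (hinj : Function.Injective lab) (hinj' : Function.Injective lab')
    (hrange : ∀ e' : G.edgeSet, lab e' ∈ Set.Icc (0 : ℝ) 1)
    (hrange' : ∀ e' : G.edgeSet, lab' e' ∈ Set.Icc (0 : ℝ) 1)
    (hagree : ∀ e' : G.edgeSet, e' ≠ e → lab' e' = lab e')
    (hmem : e ∈ setFF G lab) (hgt : Z G lab e < ENNReal.ofReal (lab' e)) :
    setFF G lab' = (setFF G lab \ {e}) ∪ {f | phi G lab e = some f} :=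
  setFF_eq_of_mem_of_gt_general G e lab lab' hinj hrange hagree hmem hgt

end MSF
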